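/- arXiv:1806.01051 — 3 statements merged into one kernel-verified Lean document; each statement's English description precedes it below -/
import Mathlib

section
/- Let X and Y be Banach spaces over 𝕜 (𝕜 = ℝ or ℂ) with X nontrivial, and let T : X → Y be a nonzero bounded linear operator. If x ∈ m_T, then T preserves Birkhoff–James orthogonality at x: for every y ∈ X, if x ⊥_B y then Tx ⊥_B Ty. -/
/-- Birkhoff–James orthogonality over the field `𝕜`. -/
def BirkhoffOrth (𝕜 : Type*) {X : Type*} [RCLike 𝕜] [NormedAddCommGroup X]
    [NormedSpace 𝕜 X] (x y : X) : Prop :=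
  ∀ lam : 𝕜, ‖x‖ ≤ ‖x + lam • y‖

/-- The minimum norm of a bounded linear operator. -/
noncomputable def minNorm {𝕜 X Y : Type*} [RCLike 𝕜] [NormedAddCommGroup X]
    [NormedSpace 𝕜 X] [NormedAddCommGroup Y] [NormedSpace 𝕜 Y] (T : X →L[𝕜] Y) : ℝ :=
  sInf {r : ℝ | ∃ x : X, ‖x‖ = 1 ∧ r = ‖T x‖}

/-! If `x` is a unit vector with `‖T x‖ = m(T)`, then for every scalar `λ`,
`‖T x‖ = m(T) ‖x‖ ≤ m(T) ‖x + λ y‖ ≤ ‖T (x + λ y)‖`, the middle step being `x ⊥_B y` and the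
last one the inequality `m(T) ‖z‖ ≤ ‖T z‖`, obtained by normalising `z`. -/

section MinNorm

variable {𝕜 X Y : Type*} [RCLike 𝕜] [NormedAddCommGroup X] [NormedSpace 𝕜 X]
  [NormedAddCommGroup Y] [NormedSpace 𝕜 Y]

theorem minNorm_nonneg (T : X →L[𝕜] Y) : 0 ≤ minNorm T :=
  Real.sInf_nonneg <| by
    rintro _ ⟨x, -, rfl⟩
    exact norm_nonneg _

theorem minNorm_le_norm_apply (T : X →L[𝕜] Y) {x : X} (hx : ‖x‖ = 1) : minNorm T ≤ ‖T x‖ :=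
  csInf_le ⟨0, by rintro _ ⟨w, -, rfl⟩; exact norm_nonneg _⟩ ⟨x, hx, rfl⟩

theorem minNorm_mul_norm_le (T : X →L[𝕜] Y) (z : X) : minNorm T * ‖z‖ ≤ ‖T z‖ := by
  rcases eq_or_ne z 0 with rfl | hz
  · simp
  have hz' : 0 < ‖z‖ := norm_pos_iff.mpr hz
  have h := minNorm_le_norm_apply T (norm_smul_inv_norm (𝕜 := 𝕜) hz)
  rw [map_smul, norm_smul, norm_inv, RCLike.norm_ofReal, abs_norm] at h
  exact (mul_comm _ _).trans_le ((le_inv_mul_iff₀ hz').mp h)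

end MinNorm

theorem stmt_3_general {𝕜 X Y : Type*} [RCLike 𝕜]
    [NormedAddCommGroup X] [NormedSpace 𝕜 X]
    [NormedAddCommGroup Y] [NormedSpace 𝕜 Y]
    (T : X →L[𝕜] Y)
    (x : X) (hx : ‖x‖ = 1) (hxm : ‖T x‖ = minNorm T) :
    ∀ y : X, BirkhoffOrth 𝕜 x y → BirkhoffOrth 𝕜 (T x) (T y) := by
  intro y hxy lam
  calc ‖T x‖ = minNorm T * ‖x‖ := by rw [hxm, hx, mul_one]
    _ ≤ minNorm T * ‖x + lam • y‖ := by gcongr; exacts [minNorm_nonneg T, hxy lam]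
    _ ≤ ‖T (x + lam • y)‖ := minNorm_mul_norm_le T _
    _ = ‖T x + lam • T y‖ := by rw [map_add, map_smul]

theorem stmt_3 {𝕜 X Y : Type*} [RCLike 𝕜]
    [NormedAddCommGroup X] [NormedSpace 𝕜 X] [CompleteSpace X] [Nontrivial X]
    [NormedAddCommGroup Y] [NormedSpace 𝕜 Y] [CompleteSpace Y]
    (T : X →L[𝕜] Y) (hT : T ≠ 0)
    (x : X) (hx : ‖x‖ = 1) (hxm : ‖T x‖ = minNorm T) :
    ∀ y : X, BirkhoffOrth 𝕜 x y → BirkhoffOrth 𝕜 (T x) (T y) :=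
  stmt_3_general T x hx hxm
end

section
/- Let H₁ and H₂ be Hilbert spaces over 𝕜 (𝕜 = ℝ or ℂ) with H₁ nontrivial, and let T : H₁ → H₂ be a bounded linear operator. For x ∈ H₁ with ‖x‖ = 1, the following are equivalent: (i) ‖Tx‖ = m(T); (ii) both (a) for every y ∈ H₁, ⟨x, y⟩ = 0 implies ⟨Tx, Ty⟩ = 0, and (b) for every y ∈ H₁ with ‖y‖ = 1 and ⟨x, y⟩ = 0, one has ‖Ty‖ ≥ ‖Tx‖. -/
open RCLike

lemma orth_of_min {𝕜 H₁ H₂ : Type*} [RCLike 𝕜]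
    [NormedAddCommGroup H₁] [InnerProductSpace 𝕜 H₁]
    [NormedAddCommGroup H₂] [InnerProductSpace 𝕜 H₂]
    (T : H₁ →L[𝕜] H₂) (x : H₁) (hx : ‖x‖ = 1)
    (hmin : ∀ z : H₁, ‖z‖ = 1 → ‖T x‖ ≤ ‖T z‖)
    (y : H₁) (hxy : (inner 𝕜 x y : 𝕜) = 0) : (inner 𝕜 (T x) (T y) : 𝕜) = 0 := by
  by_contra hc
  set c : 𝕜 := inner 𝕜 (T x) (T y) with hcdef
  have hcpos : 0 < ‖c‖ := norm_pos_iff.mpr hc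
  set K : ℝ := ‖T y‖ ^ 2 - ‖T x‖ ^ 2 * ‖y‖ ^ 2 with hK
  set t : ℝ := (max K 1)⁻¹ with ht
  have hmax1 : (1:ℝ) ≤ max K 1 := le_max_right _ _
  have htpos : 0 < t := by positivity
  have htK : t * K ≤ 1 := by
    calc t * K ≤ t * max K 1 := by
          exact mul_le_mul_of_nonneg_left (le_max_left _ _) htpos.le
      _ = 1 := inv_mul_cancel₀ (by linarith)
  set s : 𝕜 := -((t : 𝕜) * (starRingEnd 𝕜) c) with hs
  have hns : ‖s‖ = t * ‖c‖ := by
    rw [hs, norm_neg, norm_mul, RCLike.norm_conj, RCLike.norm_ofReal,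
      abs_of_pos htpos]
  have hsy : (inner 𝕜 x (s • y) : 𝕜) = 0 := by rw [inner_smul_right, hxy, mul_zero]
  set z : H₁ := x + s • y with hz
  have hz2 : ‖z‖ ^ 2 = 1 + ‖s‖ ^ 2 * ‖y‖ ^ 2 := by
    rw [hz, @norm_add_sq 𝕜, hsy, hx, norm_smul]
    simp
    ring
  have hz1 : (1:ℝ) ≤ ‖z‖ ^ 2 := by
    have := mul_nonneg (sq_nonneg ‖s‖) (sq_nonneg ‖y‖)
    rw [hz2]; linarith
  have hzpos : 0 < ‖z‖ := by
    nlinarith [norm_nonneg z]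
  -- unit vector
  set u : H₁ := ((‖z‖ : 𝕜))⁻¹ • z with hu
  have hu1 : ‖u‖ = 1 := by
    rw [hu, norm_smul, norm_inv, RCLike.norm_ofReal, abs_of_pos hzpos,
      inv_mul_cancel₀ hzpos.ne']
  have hTu : ‖T u‖ = ‖z‖⁻¹ * ‖T z‖ := by
    rw [hu, map_smul, norm_smul, norm_inv, RCLike.norm_ofReal, abs_of_pos hzpos]
  have h1 : ‖T x‖ ≤ ‖z‖⁻¹ * ‖T z‖ := hTu ▸ hmin u hu1
  have h2 : ‖T x‖ * ‖z‖ ≤ ‖T z‖ := by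
    calc ‖T x‖ * ‖z‖ ≤ (‖z‖⁻¹ * ‖T z‖) * ‖z‖ := by
          exact mul_le_mul_of_nonneg_right h1 hzpos.le
      _ = ‖T z‖ := by field_simp
  have h3 : ‖T x‖ ^ 2 * ‖z‖ ^ 2 ≤ ‖T z‖ ^ 2 := by
    have := pow_le_pow_left₀ (mul_nonneg (norm_nonneg (T x)) (norm_nonneg z)) h2 2
    rwa [mul_pow] at this
  -- expand ‖T z‖^2
  have hTz : T z = T x + s • T y := by rw [hz, map_add, map_smul]
  have hresc : re (s * c) = -(t * ‖c‖ ^ 2) := by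
    have hsc : s * c = ((-(t * ‖c‖ ^ 2) : ℝ) : 𝕜) := by
      rw [hs, neg_mul, mul_assoc, RCLike.conj_mul]
      push_cast
      ring
    rw [hsc, RCLike.ofReal_re]
  have hTz2 : ‖T z‖ ^ 2 = ‖T x‖ ^ 2 - 2 * (t * ‖c‖ ^ 2) + ‖s‖ ^ 2 * ‖T y‖ ^ 2 := by
    rw [hTz, @norm_add_sq 𝕜, inner_smul_right, ← hcdef, hresc, norm_smul]
    ring
  rw [hTz2, hz2, hns] at h3
  nlinarith [sq_nonneg ‖c‖, mul_pos htpos (mul_pos hcpos hcpos)]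


lemma min_of_orth {𝕜 H₁ H₂ : Type*} [RCLike 𝕜]
    [NormedAddCommGroup H₁] [InnerProductSpace 𝕜 H₁]
    [NormedAddCommGroup H₂] [InnerProductSpace 𝕜 H₂]
    (T : H₁ →L[𝕜] H₂) (x : H₁) (hx : ‖x‖ = 1)
    (ha : ∀ y : H₁, (inner 𝕜 x y : 𝕜) = 0 → (inner 𝕜 (T x) (T y) : 𝕜) = 0)
    (hb : ∀ y : H₁, ‖y‖ = 1 → (inner 𝕜 x y : 𝕜) = 0 → ‖T x‖ ≤ ‖T y‖)
    (z : H₁) (hz : ‖z‖ = 1) : ‖T x‖ ≤ ‖T z‖ := by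
  set α : 𝕜 := inner 𝕜 x z with hα
  set w : H₁ := z - α • x with hw
  have hxx : (inner 𝕜 x x : 𝕜) = 1 := by
    rw [inner_self_eq_norm_sq_to_K, hx]
    norm_num
  have hxw : (inner 𝕜 x w : 𝕜) = 0 := by
    rw [hw, inner_sub_right, inner_smul_right, hxx, mul_one, ← hα, sub_self]
  have hzd : z = α • x + w := by rw [hw]; abel
  -- norm decomposition of z
  have hwx : (inner 𝕜 (α • x) w : 𝕜) = 0 := by
    rw [inner_smul_left, hxw, mul_zero]
  have hz2 : ‖α‖ ^ 2 + ‖w‖ ^ 2 = 1 := by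
    have := @norm_add_sq 𝕜 _ _ _ _ (α • x) w
    rw [hwx, ← hzd, hz, norm_smul, hx, mul_one] at this
    simp at this
    linarith [this]
  -- norm decomposition of T z
  have hTwx : (inner 𝕜 (T (α • x)) (T w) : 𝕜) = 0 := by
    rw [map_smul, inner_smul_left, ha w hxw, mul_zero]
  have hTz2 : ‖T z‖ ^ 2 = ‖α‖ ^ 2 * ‖T x‖ ^ 2 + ‖T w‖ ^ 2 := by
    have := @norm_add_sq 𝕜 _ _ _ _ (T (α • x)) (T w)
    rw [hTwx, ← map_add, ← hzd, map_smul, norm_smul] at this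
    simp at this
    rw [this]; ring
  -- ‖T w‖ ≥ ‖w‖ * ‖T x‖
  have hTw : ‖w‖ * ‖T x‖ ≤ ‖T w‖ := by
    rcases eq_or_ne w 0 with h0 | h0
    · simp [h0]
    · have hwpos : 0 < ‖w‖ := norm_pos_iff.mpr h0
      set y : H₁ := ((‖w‖ : 𝕜))⁻¹ • w with hy
      have hy1 : ‖y‖ = 1 := by
        rw [hy, norm_smul, norm_inv, RCLike.norm_ofReal, abs_of_pos hwpos,
          inv_mul_cancel₀ hwpos.ne']
      have hxy : (inner 𝕜 x y : 𝕜) = 0 := by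
        rw [hy, inner_smul_right, hxw, mul_zero]
      have := hb y hy1 hxy
      rw [hy, map_smul, norm_smul, norm_inv, RCLike.norm_ofReal,
        abs_of_pos hwpos] at this
      calc ‖w‖ * ‖T x‖ ≤ ‖w‖ * (‖w‖⁻¹ * ‖T w‖) := by
            exact mul_le_mul_of_nonneg_left this hwpos.le
        _ = ‖T w‖ := by field_simp
  -- combine
  have h1 : ‖T x‖ ^ 2 ≤ ‖T z‖ ^ 2 := by
    have h2 : ‖w‖ ^ 2 * ‖T x‖ ^ 2 ≤ ‖T w‖ ^ 2 := by
      have := pow_le_pow_left₀ (mul_nonneg (norm_nonneg w) (norm_nonneg (T x))) hTw 2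
      rwa [mul_pow] at this
    nlinarith [sq_nonneg ‖α‖]
  nlinarith [norm_nonneg (T x), norm_nonneg (T z)]

local notation "⟪" a ", " b "⟫" => @inner _ _ _ a b

-- helper: min characterization
lemma minNorm_char {𝕜 X Y : Type*} [RCLike 𝕜] [NormedAddCommGroup X]
    [NormedSpace 𝕜 X] [NormedAddCommGroup Y] [NormedSpace 𝕜 Y] (T : X →L[𝕜] Y)
    (x : X) (hx : ‖x‖ = 1) :
    ‖T x‖ = sInf {r : ℝ | ∃ x : X, ‖x‖ = 1 ∧ r = ‖T x‖} ↔
      ∀ z : X, ‖z‖ = 1 → ‖T x‖ ≤ ‖T z‖ := by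
  have hne : {r : ℝ | ∃ x : X, ‖x‖ = 1 ∧ r = ‖T x‖}.Nonempty := ⟨‖T x‖, x, hx, rfl⟩
  have hbd : BddBelow {r : ℝ | ∃ x : X, ‖x‖ = 1 ∧ r = ‖T x‖} := by
    refine ⟨0, ?_⟩
    rintro r ⟨z, -, rfl⟩
    exact norm_nonneg _
  constructor
  · intro h z hz
    rw [h]
    exact csInf_le hbd ⟨z, hz, rfl⟩
  · intro h
    refine le_antisymm ?_ (csInf_le hbd ⟨x, hx, rfl⟩)
    refine le_csInf hne ?_
    rintro r ⟨z, hz, rfl⟩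
    exact h z hz

theorem stmt_8 {𝕜 H₁ H₂ : Type*} [RCLike 𝕜]
    [NormedAddCommGroup H₁] [InnerProductSpace 𝕜 H₁] [CompleteSpace H₁] [Nontrivial H₁]
    [NormedAddCommGroup H₂] [InnerProductSpace 𝕜 H₂] [CompleteSpace H₂]
    (T : H₁ →L[𝕜] H₂) (x : H₁) (hx : ‖x‖ = 1) :
    ‖T x‖ = minNorm T ↔
      ((∀ y : H₁, (inner 𝕜 x y : 𝕜) = 0 → (inner 𝕜 (T x) (T y) : 𝕜) = 0) ∧
       (∀ y : H₁, ‖y‖ = 1 → (inner 𝕜 x y : 𝕜) = 0 → ‖T x‖ ≤ ‖T y‖)) := by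
  rw [minNorm, minNorm_char T x hx]
  constructor
  · intro h
    exact ⟨orth_of_min T x hx h, fun y hy hxy => h y hy⟩
  · rintro ⟨ha, hb⟩ z hz
    exact min_of_orth T x hx ha hb z hz
end

section
/- Let H₁ and H₂ be Hilbert spaces over 𝕜 (𝕜 = ℝ or ℂ) with H₁ nontrivial, and let T : H₁ → H₂ be a bounded linear operator such that both M_T and m_T are nonempty. Then either M_T = m_T = {x ∈ H₁ : ‖x‖ = 1}, or ⟨x, y⟩ = 0 for every x ∈ M_T and every y ∈ m_T. -/
open RCLike

lemma aux_zero {r C : ℝ} (h : ∀ t : ℝ, 2 * t * r ≤ C * t ^ 2) : r = 0 := by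
  by_contra hr
  have hs : (0:ℝ) < (|C|+1)⁻¹ := by positivity
  have h1 := h (r * (|C|+1)⁻¹)
  have hr2 : 0 < r ^ 2 := by positivity
  have hC : C ≤ |C| := le_abs_self C
  have hinv : (|C|+1) * (|C|+1)⁻¹ = 1 := by
    have : |C| + 1 ≠ 0 := by positivity
    field_simp
  nlinarith [mul_pos hr2 hs, mul_pos (mul_pos hr2 hs) hs, abs_nonneg C]

lemma maxOrth {𝕜 H₁ H₂ : Type*} [RCLike 𝕜]
    [NormedAddCommGroup H₁] [InnerProductSpace 𝕜 H₁]
    [NormedAddCommGroup H₂] [InnerProductSpace 𝕜 H₂]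
    (T : H₁ →L[𝕜] H₂) {x : H₁}
    (hx : ‖x‖ = 1) (hTx : ‖T x‖ = ‖T‖) :
    ∀ z : H₁, (inner 𝕜 x z : 𝕜) = 0 → (inner 𝕜 (T x) (T z) : 𝕜) = 0 := by
  have key : ∀ z : H₁, (inner 𝕜 x z : 𝕜) = 0 → re (inner 𝕜 (T x) (T z) : 𝕜) = 0 := by
    intro z hz
    apply aux_zero (C := ‖T‖^2 * ‖z‖^2 - ‖T z‖^2)
    intro t
    have hle : ‖T (x + (t:𝕜) • z)‖^2 ≤ ‖T‖^2 * ‖x + (t:𝕜) • z‖^2 := by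
      have h1 := T.le_opNorm (x + (t:𝕜) • z)
      nlinarith [norm_nonneg (T (x + (t:𝕜) • z)), norm_nonneg (x + (t:𝕜) • z), T.opNorm_nonneg]
    have e1 : ‖T (x + (t:𝕜) • z)‖^2
        = ‖T x‖^2 + 2 * (t * re (inner 𝕜 (T x) (T z) : 𝕜)) + t^2 * ‖T z‖^2 := by
      rw [map_add, map_smul, norm_add_sq (𝕜 := 𝕜)]
      rw [inner_smul_right, norm_smul]
      simp [RCLike.norm_ofReal, mul_pow, sq_abs]
    have e2 : ‖x + (t:𝕜) • z‖^2 = 1 + t^2 * ‖z‖^2 := by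
      rw [norm_add_sq (𝕜 := 𝕜), inner_smul_right, hz, norm_smul, hx]
      simp [RCLike.norm_ofReal, mul_pow, sq_abs]
    rw [e1, e2, hTx] at hle
    nlinarith [hle]
  intro z hz
  set w : 𝕜 := inner 𝕜 (T x) (T z) with hw
  have hz' : (inner 𝕜 x ((starRingEnd 𝕜 w) • z) : 𝕜) = 0 := by
    rw [inner_smul_right, hz, mul_zero]
  have := key _ hz'
  rw [map_smul, inner_smul_right, ← hw, RCLike.conj_mul] at this
  rw [← RCLike.ofReal_pow, RCLike.ofReal_re] at this
  have h3 : ‖w‖ = 0 := by nlinarith [norm_nonneg w]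
  simpa using norm_eq_zero.mp h3

lemma minNorm_le {𝕜 X Y : Type*} [RCLike 𝕜] [NormedAddCommGroup X]
    [NormedSpace 𝕜 X] [NormedAddCommGroup Y] [NormedSpace 𝕜 Y] (T : X →L[𝕜] Y)
    {u : X} (hu : ‖u‖ = 1) : minNorm T ≤ ‖T u‖ := by
  apply csInf_le
  · exact ⟨0, fun r ⟨x, hx, hr⟩ => hr ▸ norm_nonneg _⟩
  · exact ⟨u, hu, rfl⟩

lemma minNorm_mul_le {𝕜 X Y : Type*} [RCLike 𝕜] [NormedAddCommGroup X]
    [NormedSpace 𝕜 X] [NormedAddCommGroup Y] [NormedSpace 𝕜 Y] (T : X →L[𝕜] Y)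
    (z : X) (hmin : 0 ≤ minNorm T) : minNorm T * ‖z‖ ≤ ‖T z‖ := by
  rcases eq_or_ne z 0 with rfl | hz
  · simp
  · have hn : (0:ℝ) < ‖z‖ := norm_pos_iff.2 hz
    have hu : ‖(‖z‖⁻¹ : 𝕜) • z‖ = 1 := by
      rw [norm_smul, norm_inv, RCLike.norm_ofReal, abs_of_pos hn, inv_mul_cancel₀ hn.ne']
    have h := minNorm_le T hu
    rw [map_smul, norm_smul, norm_inv, RCLike.norm_ofReal, abs_of_pos hn] at h
    rw [mul_comm]
    calc ‖z‖ * minNorm T ≤ ‖z‖ * (‖z‖⁻¹ * ‖T z‖) := by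
          exact mul_le_mul_of_nonneg_left h hn.le
      _ = ‖T z‖ := by field_simp

theorem stmt_13 {𝕜 H₁ H₂ : Type*} [RCLike 𝕜]
    [NormedAddCommGroup H₁] [InnerProductSpace 𝕜 H₁] [CompleteSpace H₁] [Nontrivial H₁]
    [NormedAddCommGroup H₂] [InnerProductSpace 𝕜 H₂] [CompleteSpace H₂]
    (T : H₁ →L[𝕜] H₂)
    (hM : {x : H₁ | ‖x‖ = 1 ∧ ‖T x‖ = ‖T‖}.Nonempty)
    (hm : {x : H₁ | ‖x‖ = 1 ∧ ‖T x‖ = minNorm T}.Nonempty) :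
    ({x : H₁ | ‖x‖ = 1 ∧ ‖T x‖ = ‖T‖} = {x : H₁ | ‖x‖ = 1} ∧
      {x : H₁ | ‖x‖ = 1 ∧ ‖T x‖ = minNorm T} = {x : H₁ | ‖x‖ = 1}) ∨
    (∀ x ∈ {x : H₁ | ‖x‖ = 1 ∧ ‖T x‖ = ‖T‖},
      ∀ y ∈ {x : H₁ | ‖x‖ = 1 ∧ ‖T x‖ = minNorm T}, (inner 𝕜 x y : 𝕜) = 0) := by
  by_cases hperp : ∀ x ∈ {x : H₁ | ‖x‖ = 1 ∧ ‖T x‖ = ‖T‖},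
      ∀ y ∈ {x : H₁ | ‖x‖ = 1 ∧ ‖T x‖ = minNorm T}, (inner 𝕜 x y : 𝕜) = 0
  · exact Or.inr hperp
  · left
    push_neg at hperp
    obtain ⟨x, hxM, y, hym, hxy⟩ := hperp
    obtain ⟨hx1, hx2⟩ := hxM
    obtain ⟨hy1, hy2⟩ := hym
    set a : 𝕜 := inner 𝕜 x y with ha
    set z : H₁ := y - a • x with hzdef
    have hmin0 : 0 ≤ minNorm T := hy2 ▸ norm_nonneg _
    have hxz : (inner 𝕜 x z : 𝕜) = 0 := by
      simp [hzdef, inner_sub_right, inner_smul_right, inner_self_eq_norm_sq_to_K, hx1, ha]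
    have hTxz : (inner 𝕜 (T x) (T z) : 𝕜) = 0 := maxOrth T hx1 hx2 z hxz
    have hy' : y = a • x + z := by simp [hzdef]
    -- Pythagoras for y
    have hn1 : ‖y‖^2 = ‖a‖^2 * ‖x‖^2 + ‖z‖^2 := by
      rw [hy', norm_add_sq (𝕜 := 𝕜), inner_smul_left, hxz, mul_zero]
      simp [norm_smul, mul_pow]
    -- Pythagoras for T y
    have hn2 : ‖T y‖^2 = ‖a‖^2 * ‖T x‖^2 + ‖T z‖^2 := by
      have : T y = a • T x + T z := by rw [hy']; simp
      rw [this, norm_add_sq (𝕜 := 𝕜), inner_smul_left, hTxz, mul_zero]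
      simp [norm_smul, mul_pow]
    have hTz : minNorm T * ‖z‖ ≤ ‖T z‖ := minNorm_mul_le T z hmin0
    have ha0 : 0 < ‖a‖ := norm_pos_iff.2 hxy
    have hmN : minNorm T ≤ ‖T‖ := by
      calc minNorm T ≤ ‖T x‖ := minNorm_le T hx1
        _ = ‖T‖ := hx2
    have hNm : ‖T‖ = minNorm T := by
      rw [hx1, hy1] at hn1
      rw [hx2, hy2] at hn2
      have hz0 : 0 ≤ minNorm T * ‖z‖ := mul_nonneg hmin0 (norm_nonneg z)
      have hTz2 : (minNorm T * ‖z‖) * (minNorm T * ‖z‖) ≤ ‖T z‖ * ‖T z‖ :=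
        mul_le_mul hTz hTz hz0 (norm_nonneg (T z))
      have h5 : ‖a‖^2 * ‖T‖^2 ≤ ‖a‖^2 * minNorm T^2 := by nlinarith
      have h6 : ‖T‖^2 ≤ minNorm T^2 :=
        le_of_mul_le_mul_left h5 (by positivity)
      have := T.opNorm_nonneg
      nlinarith
    have hmain : ∀ u : H₁, ‖u‖ = 1 → ‖T u‖ = ‖T‖ := by
      intro u hu
      refine le_antisymm ?_ (hNm ▸ minNorm_le T hu)
      calc ‖T u‖ ≤ ‖T‖ * ‖u‖ := T.le_opNorm u
        _ = ‖T‖ := by rw [hu, mul_one]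
    constructor <;> ext u <;> simp only [Set.mem_setOf_eq] <;>
        refine ⟨fun h => h.1, fun hu => ⟨hu, ?_⟩⟩
    · exact hmain u hu
    · exact (hmain u hu).trans hNm
end
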